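/- For λ, x ∈ ℝ, the function u₁(λ,x) = e^{-ix²/4} M(1/4 + iλ/2, 1/2, ix²/2) is a real-valued even solution of the differential equation −u'' − (1/4)x²u = λu with u₁(λ,0) = 1 and ∂ₓu₁(λ,0) = 0. -/

import Mathlib

open Complex

/-- Kummer's confluent hypergeometric function of the first kind. -/
noncomputable def kummerM (a b z : ℂ) : ℂ :=
  ∑' n : ℕ, ((ascPochhammer ℂ n).eval a / (ascPochhammer ℂ n).eval b) * z^n / (n.factorial : ℂ)

/-- The even solution `u₁(λ,x) = e^{-ix²/4} M(1/4 + iλ/2, 1/2, ix²/2)`. -/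
noncomputable def u₁ (lam : ℝ) (x : ℝ) : ℂ :=
  Complex.exp (-I * (x:ℂ)^2/4) * kummerM (1/4 + I * lam/2) (1/2) (I * (x:ℂ)^2/2)

namespace U1Aux

open Filter Topology

/-- `P n x = (x)ₙ`. -/
noncomputable def P (n : ℕ) (x : ℂ) : ℂ := (ascPochhammer ℂ n).eval x

lemma P_zero (x : ℂ) : P 0 x = 1 := by simp [P]

lemma P_succ (n : ℕ) (x : ℂ) : P (n+1) x = P n x * (x + n) := by
  simp [P, ascPochhammer_succ_eval]

lemma P_ne_zero {x : ℂ} (hx : ∀ k : ℕ, x + k ≠ 0) (n : ℕ) : P n x ≠ 0 := by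
  induction n with
  | zero => simp [P_zero]
  | succ n ih => rw [P_succ]; exact mul_ne_zero ih (hx n)

section
variable (lam : ℝ)

noncomputable def aa : ℂ := 1/4 + I * lam/2

end
noncomputable def bb : ℂ := 1/2
section
variable (lam : ℝ)

lemma aa_add_ne (k : ℕ) : aa lam + k ≠ 0 := by
  intro h
  have := congrArg Complex.re h
  simp [aa, Complex.add_re, Complex.div_re] at this
  norm_num at this
  nlinarith [this, Nat.cast_nonneg (α := ℝ) k]

lemma bb_add_ne (k : ℕ) : bb + k ≠ 0 := by
  intro h
  have := congrArg Complex.re h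
  simp [bb, Complex.add_re, Complex.div_re] at this
  norm_num at this
  nlinarith [this, Nat.cast_nonneg (α := ℝ) k]

/-- The Taylor coefficients of the Kummer function. -/
noncomputable def cc (n : ℕ) : ℂ := P n (aa lam) / P n bb / (n.factorial : ℂ)

lemma cc_zero : cc lam 0 = 1 := by simp [cc, P_zero]

lemma cc_ne_zero (n : ℕ) : cc lam n ≠ 0 := by
  apply div_ne_zero (div_ne_zero (P_ne_zero (aa_add_ne lam) n) (P_ne_zero bb_add_ne n))
  exact_mod_cast Nat.factorial_ne_zero n

lemma cc_rec (n : ℕ) :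
    ((n:ℂ)+1) * (bb + n) * cc lam (n+1) = (aa lam + n) * cc lam n := by
  have hPb := P_ne_zero bb_add_ne n
  have hb := bb_add_ne n
  have hf : ((n.factorial : ℂ)) ≠ 0 := by exact_mod_cast Nat.factorial_ne_zero n
  have hn : ((n:ℂ)+1) ≠ 0 := Nat.cast_add_one_ne_zero n
  rw [cc, cc, P_succ, P_succ, Nat.factorial_succ]
  push_cast
  field_simp


lemma norm_nat_add_one (n : ℕ) : ‖((n:ℂ)+1)‖ = (n:ℝ)+1 := by
  rw [show ((n:ℂ)+1) = ((n+1:ℕ):ℂ) by push_cast; ring, Complex.norm_natCast]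
  push_cast; ring

lemma cc_norm_ratio (n : ℕ) :
    ‖cc lam (n+1)‖ / ‖cc lam n‖ = ‖aa lam + n‖ / (‖bb + n‖ * ((n:ℝ)+1)) := by
  have h := cc_rec lam n
  have hn : ((n:ℂ)+1) ≠ 0 := Nat.cast_add_one_ne_zero n
  have hb := bb_add_ne n
  have h1 : cc lam (n+1) = (aa lam + n) * cc lam n / (((n:ℂ)+1) * (bb + n)) := by
    rw [eq_div_iff (mul_ne_zero hn hb)]
    linear_combination h
  have hcn : ‖cc lam n‖ ≠ 0 := norm_ne_zero_iff.mpr (cc_ne_zero lam n)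
  have hbn : ‖bb + (n:ℂ)‖ ≠ 0 := norm_ne_zero_iff.mpr hb
  rw [h1, norm_div, norm_mul, norm_mul, norm_nat_add_one, div_div,
    mul_div_mul_right _ _ hcn, mul_comm (((n:ℝ)+1)) (‖bb + (n:ℂ)‖)]

lemma bb_re (n : ℕ) : ((bb + (n:ℂ))).re = 1/2 + n := by
  simp [bb, Complex.add_re]

lemma norm_bb_ge (n : ℕ) : (n:ℝ) ≤ ‖bb + (n:ℂ)‖ := by
  have h1 : ((bb + (n:ℂ))).re ≤ ‖bb + (n:ℂ)‖ := by
    exact Complex.re_le_norm _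
  rw [bb_re] at h1
  linarith

lemma ratio_tendsto :
    Tendsto (fun n => ‖cc lam (n+1)‖ / ‖cc lam n‖) atTop (𝓝 0) := by
  set C := ‖aa lam‖ + 1 with hC
  apply tendsto_of_tendsto_of_tendsto_of_le_of_le' tendsto_const_nhds
    (tendsto_const_div_atTop_nhds_zero_nat C)
  · exact Eventually.of_forall fun n => div_nonneg (norm_nonneg _) (norm_nonneg _)
  · filter_upwards [eventually_ge_atTop 1] with n hn
    have hn1 : (1:ℝ) ≤ (n:ℝ) := by exact_mod_cast hn
    rw [cc_norm_ratio]
    have hA : ‖aa lam + (n:ℂ)‖ ≤ ‖aa lam‖ + n := by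
      calc ‖aa lam + (n:ℂ)‖ ≤ ‖aa lam‖ + ‖((n:ℂ))‖ := norm_add_le _ _
      _ = ‖aa lam‖ + n := by rw [Complex.norm_natCast]
    have hB := norm_bb_ge n
    have hApos : (0:ℝ) ≤ ‖aa lam‖ := norm_nonneg _
    have hnpos : (0:ℝ) < (n:ℝ) := by linarith
    have hBpos : (0:ℝ) < ‖bb + (n:ℂ)‖ * ((n:ℝ)+1) := by nlinarith
    rw [div_le_div_iff₀ hBpos hnpos]
    calc ‖aa lam + (n:ℂ)‖ * n ≤ (‖aa lam‖ + n) * n := by nlinarith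
    _ ≤ ((‖aa lam‖+1)*((n:ℝ)+1))*n := by
        have h5 : ‖aa lam‖ + (n:ℝ) ≤ (‖aa lam‖+1)*((n:ℝ)+1) := by nlinarith
        exact mul_le_mul_of_nonneg_right h5 hnpos.le
    _ = (‖aa lam‖+1)*(((n:ℝ)+1)*n) := by ring
    _ ≤ C * (‖bb + (n:ℂ)‖ * ((n:ℝ)+1)) := by
        rw [hC]
        have h6 : ((n:ℝ)+1)*n ≤ ‖bb + (n:ℂ)‖ * ((n:ℝ)+1) := by nlinarith
        nlinarith

lemma tendsto_ratio_aux : Tendsto (fun n : ℕ => ((n:ℝ)+2)/((n:ℝ)+1)) atTop (𝓝 1) := by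
  have h : Tendsto (fun n : ℕ => 1 + 1/((n:ℝ)+1)) atTop (𝓝 (1 + 0)) :=
    tendsto_const_nhds.add tendsto_one_div_add_atTop_nhds_zero_nat
  rw [add_zero] at h
  apply h.congr
  intro n
  have : ((n:ℝ)+1) ≠ 0 := by positivity
  field_simp
  ring

lemma summable_weight (k : ℕ) {r : ℝ} (hr : 0 < r) :
    Summable (fun n => ‖cc lam n‖ * ((n:ℝ)+1)^k * r^n) := by
  have hpos : ∀ n : ℕ, 0 < ‖cc lam n‖ * ((n:ℝ)+1)^k * r^n := by
    intro n
    have := norm_pos_iff.mpr (cc_ne_zero lam n)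
    positivity
  apply summable_of_ratio_test_tendsto_lt_one (l := 0) one_pos
  · exact Eventually.of_forall fun n => (hpos n).ne'
  · have h2 : Tendsto (fun n : ℕ => (‖cc lam (n+1)‖ / ‖cc lam n‖) *
        ((((n:ℝ)+2)/((n:ℝ)+1))^k * r)) atTop (𝓝 (0 * (1^k * r))) :=
      (ratio_tendsto lam).mul (((tendsto_ratio_aux).pow k).mul_const r)
    rw [zero_mul] at h2
    apply h2.congr
    intro n
    have hcn : (0:ℝ) < ‖cc lam n‖ := norm_pos_iff.mpr (cc_ne_zero lam n)
    have hn1 : (0:ℝ) < (n:ℝ)+1 := by positivity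
    rw [Real.norm_of_nonneg (hpos (n+1)).le, Real.norm_of_nonneg (hpos n).le]
    have hrn : r^n ≠ 0 := pow_ne_zero n hr.ne'
    push_cast
    rw [pow_succ, div_pow, eq_div_iff (by positivity)]
    field_simp [hcn.ne']
    have e1 : (‖cc lam n‖) * (‖cc lam n‖)⁻¹ = 1 :=
      mul_inv_cancel₀ (by exact hcn.ne')
    have e2 : ((1+(n:ℝ))⁻¹)^k * ((1+(n:ℝ)))^k = 1 := by
      rw [← mul_pow, inv_mul_cancel₀ (by positivity), one_pow]
    ring

end

lemma hasDerivAt_tsum_pow (c : ℕ → ℂ)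
    (hs : ∀ r : ℝ, 1 ≤ r → Summable (fun n => ‖c n‖ * ((n:ℝ)+1) * r^n)) (z : ℂ) :
    HasDerivAt (fun w => ∑' n, c n * w^n) (∑' n : ℕ, ((n:ℂ)+1) * c (n+1) * z^n) z := by
  set R : ℝ := ‖z‖ + 1 with hR
  have hR1 : (1:ℝ) ≤ R := le_add_of_nonneg_left (norm_nonneg z)
  have hRpos : (0:ℝ) < R := by linarith
  have hu : Summable (fun n => ‖c n‖ * ((n:ℝ)+1) * R^n) := hs R hR1
  have hzmem : z ∈ Metric.ball (0:ℂ) R := by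
    rw [Metric.mem_ball, dist_zero_right]; linarith
  have hbound : ∀ (n : ℕ), ∀ y ∈ Metric.ball (0:ℂ) R,
      ‖c n * ((n:ℂ) * y^(n-1))‖ ≤ ‖c n‖ * ((n:ℝ)+1) * R^n := by
    intro n y hy
    rw [Metric.mem_ball, dist_zero_right] at hy
    rw [norm_mul, norm_mul, norm_pow, Complex.norm_natCast, mul_assoc]
    refine mul_le_mul_of_nonneg_left ?_ (norm_nonneg _)
    calc (n:ℝ) * ‖y‖^(n-1) ≤ (n:ℝ) * R^(n-1) := by
          refine mul_le_mul_of_nonneg_left ?_ (Nat.cast_nonneg n)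
          exact pow_le_pow_left₀ (norm_nonneg y) hy.le _
    _ ≤ ((n:ℝ)+1) * R^n := by
          refine mul_le_mul (by linarith) (pow_le_pow_right₀ hR1 (Nat.sub_le n 1)) ?_ (by linarith)
          positivity
  have hg0 : Summable (fun n => c n * (0:ℂ)^n) := by
    apply summable_of_ne_finset_zero (s := {0})
    intro n hn
    simp only [Finset.mem_singleton] at hn
    rw [zero_pow hn, mul_zero]
  have hder := hasDerivAt_tsum_of_isPreconnected hu Metric.isOpen_ball
    (convex_ball (0:ℂ) R).isPreconnected
    (fun n y _ => (hasDerivAt_pow n y).const_mul (c n))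
    hbound (Metric.mem_ball_self hRpos) hg0 hzmem
  have hsum' : Summable (fun n => c n * ((n:ℂ) * z^(n-1))) :=
    Summable.of_norm_bounded hu (fun n => hbound n z hzmem)
  have hval : ∑' n, c n * ((n:ℂ) * z^(n-1)) = ∑' n : ℕ, ((n:ℂ)+1) * c (n+1) * z^n := by
    rw [Summable.tsum_eq_zero_add hsum']
    simp only [Nat.cast_zero, zero_mul, mul_zero, zero_add]
    apply tsum_congr
    intro n
    have : (n:ℕ) + 1 - 1 = n := rfl
    rw [this]
    push_cast
    ring
  rw [hval] at hder
  exact hder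

section
variable (lam : ℝ)

noncomputable def c1 (n : ℕ) : ℂ := ((n:ℂ)+1) * cc lam (n+1)

noncomputable def M0 (z : ℂ) : ℂ := ∑' n, cc lam n * z^n
noncomputable def M1 (z : ℂ) : ℂ := ∑' n, c1 lam n * z^n
noncomputable def M2 (z : ℂ) : ℂ := ∑' n : ℕ, ((n:ℂ)+1) * c1 lam (n+1) * z^n

lemma norm_c1 (n : ℕ) : ‖c1 lam n‖ = ((n:ℝ)+1) * ‖cc lam (n+1)‖ := by
  rw [c1, norm_mul, norm_nat_add_one]

lemma hs0 : ∀ r : ℝ, 1 ≤ r → Summable (fun n => ‖cc lam n‖ * ((n:ℝ)+1) * r^n) := by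
  intro r hr
  have := summable_weight lam 1 (by linarith : (0:ℝ) < r)
  simpa [pow_one] using this

lemma hs1 : ∀ r : ℝ, 1 ≤ r → Summable (fun n => ‖c1 lam n‖ * ((n:ℝ)+1) * r^n) := by
  intro r hr
  have hrpos : (0:ℝ) < r := by linarith
  have hmaj := (summable_nat_add_iff
    (f := fun n => ‖cc lam n‖ * ((n:ℝ)+1)^3 * r^n) 1).2 (summable_weight lam 3 hrpos)
  refine Summable.of_nonneg_of_le (fun n => by positivity) (fun n => ?_) hmaj
  rw [norm_c1]
  have h1 : ((n:ℝ)+1) * ‖cc lam (n+1)‖ * ((n:ℝ)+1) * r^n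
      = ‖cc lam (n+1)‖ * ((n:ℝ)+1)^2 * r^n := by ring
  rw [h1]
  push_cast
  have h2 : ((n:ℝ)+1)^2 ≤ ((n:ℝ)+1+1)^3 := by nlinarith [Nat.cast_nonneg (α := ℝ) n]
  have h3 : r^n ≤ r^(n+1) := pow_le_pow_right₀ hr (Nat.le_succ n)
  refine mul_le_mul (mul_le_mul_of_nonneg_left h2 (norm_nonneg _)) h3 (by positivity)
    (by positivity)

lemma hM0' (z : ℂ) : HasDerivAt (M0 lam) (M1 lam z) z :=
  hasDerivAt_tsum_pow (cc lam) (hs0 lam) z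

lemma hM1' (z : ℂ) : HasDerivAt (M1 lam) (M2 lam z) z :=
  hasDerivAt_tsum_pow (c1 lam) (hs1 lam) z

lemma summable_M_aux (j k : ℕ) (z : ℂ) :
    Summable (fun n => ‖cc lam (n+j)‖ * ((n:ℝ)+(j:ℝ)+1)^k * ‖z‖^n) := by
  set r : ℝ := ‖z‖ + 1 with hr
  have hr1 : (1:ℝ) ≤ r := le_add_of_nonneg_left (norm_nonneg z)
  have hrpos : (0:ℝ) < r := by linarith
  have hmaj : Summable (fun n => ‖cc lam (n+j)‖ * (((n+j:ℕ):ℝ)+1)^(k) * r^(n+j)) :=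
    (summable_nat_add_iff j).2 (summable_weight lam k hrpos)
  apply Summable.of_nonneg_of_le (fun n => by positivity) _ hmaj
  intro n
  have hz : ‖z‖ ≤ r := by rw [hr]; linarith
  refine mul_le_mul ?_ (pow_le_pow_left₀ (norm_nonneg z) hz n |>.trans
    (pow_le_pow_right₀ hr1 (Nat.le_add_right n j))) (by positivity) (by positivity)
  apply le_of_eq
  push_cast
  ring

lemma sm0 (z : ℂ) : Summable (fun n => cc lam n * z^n) := by
  apply Summable.of_norm_bounded (summable_M_aux lam 0 0 z)
  intro n
  rw [norm_mul, norm_pow]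
  simp

lemma sm1 (z : ℂ) : Summable (fun n => c1 lam n * z^n) := by
  apply Summable.of_norm_bounded (summable_M_aux lam 1 1 z)
  intro n
  rw [norm_mul, norm_pow, norm_c1, pow_one]
  push_cast
  refine mul_le_mul_of_nonneg_right ?_ (by positivity)
  nlinarith [norm_nonneg (cc lam (n+1)), Nat.cast_nonneg (α := ℝ) n]

lemma sm2 (z : ℂ) : Summable (fun n : ℕ => ((n:ℂ)+1) * c1 lam (n+1) * z^n) := by
  apply Summable.of_norm_bounded (summable_M_aux lam 2 2 z)
  intro n
  rw [norm_mul, norm_mul, norm_pow, norm_c1, norm_nat_add_one]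
  have h2 : n + 1 + 1 = n + 2 := rfl
  rw [h2]
  push_cast
  have h1 : ((n:ℝ)+1) * (((n:ℝ)+1+1) * ‖cc lam (n+2)‖) * ‖z‖^n
      = ‖cc lam (n+2)‖ * (((n:ℝ)+1)*((n:ℝ)+2)) * ‖z‖^n := by ring
  rw [h1]
  refine mul_le_mul_of_nonneg_right ?_ (by positivity)
  refine mul_le_mul_of_nonneg_left ?_ (norm_nonneg _)
  nlinarith [Nat.cast_nonneg (α := ℝ) n]

lemma kummer_eq (z : ℂ) :
    z * M2 lam z + (bb - z) * M1 lam z - aa lam * M0 lam z = 0 := by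
  set f : ℕ → ℂ := fun n => (bb * c1 lam n - aa lam * cc lam n) * z^n with hf
  have hsf : Summable f := by
    apply Summable.congr (((sm1 lam z).mul_left bb).sub ((sm0 lam z).mul_left (aa lam)))
    intro n
    simp only [hf]
    ring
  have hf0 : f 0 = 0 := by
    have h := cc_rec lam 0
    simp only [Nat.cast_zero, zero_add, add_zero, one_mul] at h
    simp only [hf, pow_zero, mul_one, c1, Nat.cast_zero, zero_add, one_mul]
    linear_combination h
  have h1 : bb * M1 lam z - aa lam * M0 lam z = ∑' n, f n := by
    rw [M1, M0, ← tsum_mul_left, ← tsum_mul_left,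
      ← Summable.tsum_sub ((sm1 lam z).mul_left bb) ((sm0 lam z).mul_left (aa lam))]
    exact tsum_congr fun n => by simp only [hf]; ring
  have h2 : z * M2 lam z - z * M1 lam z = - ∑' n, f (n+1) := by
    rw [M2, M1, ← tsum_mul_left, ← tsum_mul_left,
      ← Summable.tsum_sub ((sm2 lam z).mul_left z) ((sm1 lam z).mul_left z), ← tsum_neg]
    apply tsum_congr
    intro n
    have h := cc_rec lam (n+1)
    push_cast at h
    simp only [hf, c1]
    push_cast
    linear_combination (z^(n+1)) * h
  have h3 : ∑' n, f (n+1) = ∑' n, f n := by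
    have h4 := Summable.tsum_eq_zero_add hsf
    rw [hf0, zero_add] at h4
    exact h4.symm
  calc z * M2 lam z + (bb - z) * M1 lam z - aa lam * M0 lam z
      = (z * M2 lam z - z * M1 lam z) + (bb * M1 lam z - aa lam * M0 lam z) := by ring
  _ = - ∑' n, f (n+1) + ∑' n, f n := by rw [h1, h2]
  _ = 0 := by rw [h3]; ring

noncomputable def g0 (z : ℂ) : ℂ := Complex.exp (-z/2) * M0 lam z
noncomputable def g1 (z : ℂ) : ℂ := Complex.exp (-z/2) * (M1 lam z - M0 lam z / 2)
noncomputable def g2 (z : ℂ) : ℂ :=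
  Complex.exp (-z/2) * (M2 lam z - M1 lam z + M0 lam z / 4)

lemma hexp' (z : ℂ) : HasDerivAt (fun w : ℂ => Complex.exp (-w/2))
    (Complex.exp (-z/2) * (-1/2)) z := by
  have h1 : HasDerivAt (fun w : ℂ => -w/2) (-1/2) z := by
    simpa using ((hasDerivAt_id z).neg.div_const 2)
  simpa using h1.cexp

lemma hg0' (z : ℂ) : HasDerivAt (g0 lam) (g1 lam z) z := by
  have h := (hexp' z).mul (hM0' lam z)
  refine HasDerivAt.congr_deriv h ?_
  rw [g1]
  ring

lemma hg1' (z : ℂ) : HasDerivAt (g1 lam) (g2 lam z) z := by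
  have h := (hexp' z).mul ((hM1' lam z).sub ((hM0' lam z).div_const 2))
  refine HasDerivAt.congr_deriv h ?_
  rw [g2, Pi.sub_apply]
  ring

/-- the inner map `z ↦ I z²/2` -/
lemma hq' (z : ℂ) : HasDerivAt (fun w : ℂ => I * w^2/2) (I * z) z := by
  have h := ((hasDerivAt_pow 2 z).const_mul I).div_const 2
  refine HasDerivAt.congr_deriv h ?_
  push_cast
  ring

noncomputable def du (x : ℝ) : ℂ := g1 lam (I * (x:ℂ)^2/2) * (I * (x:ℂ))

noncomputable def ddu (x : ℝ) : ℂ :=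
  g2 lam (I * (x:ℂ)^2/2) * (I * (x:ℂ)) * (I * (x:ℂ)) + g1 lam (I * (x:ℂ)^2/2) * I

lemma u₁_eq (x : ℝ) : u₁ lam x = g0 lam (I * (x:ℂ)^2/2) := by
  rw [u₁, g0]
  have h1 : -(I * (x:ℂ)^2/2)/2 = -I * (x:ℂ)^2/4 := by ring
  rw [h1]
  congr 1
  rw [kummerM, M0]
  apply tsum_congr
  intro n
  rw [cc, aa, bb, P, P]
  ring

lemma hu' (x : ℝ) : HasDerivAt (u₁ lam) (du lam x) x := by
  have h : HasDerivAt (fun z : ℂ => g0 lam (I * z^2/2))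
      (g1 lam (I * (x:ℂ)^2/2) * (I * (x:ℂ))) (x:ℂ) :=
    HasDerivAt.comp _ (hg0' lam _) (hq' (x:ℂ))
  have h2 := h.comp_ofReal
  rw [du]
  apply h2.congr_of_eventuallyEq
  filter_upwards with y
  rw [u₁_eq]

lemma hdu' (x : ℝ) : HasDerivAt (du lam) (ddu lam x) x := by
  have hinner : HasDerivAt (fun z : ℂ => g1 lam (I * z^2/2))
      (g2 lam (I * (x:ℂ)^2/2) * (I * (x:ℂ))) (x:ℂ) :=
    HasDerivAt.comp _ (hg1' lam _) (hq' (x:ℂ))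
  have hlin : HasDerivAt (fun z : ℂ => I * z) I (x:ℂ) := by
    simpa using (hasDerivAt_id (x:ℂ)).const_mul I
  have h := (hinner.mul hlin).comp_ofReal
  rw [ddu]
  exact h

lemma ode (x : ℝ) : ddu lam x = -((lam:ℂ) + (x:ℂ)^2/4) * u₁ lam x := by
  have K := kummer_eq lam (I * (x:ℂ)^2/2)
  rw [ddu, u₁_eq, g0, g1, g2, bb, aa] at *
  set E := Complex.exp (-(I * (x:ℂ)^2/2)/2) with hE
  set m0 := M0 lam (I * (x:ℂ)^2/2)
  set m1 := M1 lam (I * (x:ℂ)^2/2)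
  set m2 := M2 lam (I * (x:ℂ)^2/2)
  have hI : (I:ℂ)^2 = -1 := Complex.I_sq
  linear_combination (2*I*E) * K +
    (E*m0*((lam:ℂ) + (x:ℂ)^2/4)) * hI

lemma u₁_zero : u₁ lam 0 = 1 := by
  rw [u₁_eq]
  simp only [Complex.ofReal_zero]
  rw [show I * (0:ℂ)^2/2 = 0 by ring, g0]
  rw [show -(0:ℂ)/2 = 0 by ring, Complex.exp_zero, one_mul, M0]
  rw [tsum_eq_single 0 (fun n hn => by rw [zero_pow hn, mul_zero])]
  simp [cc_zero]

lemma du_zero : du lam 0 = 0 := by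
  rw [du]
  simp

noncomputable def vf (R : ℝ) (t : ℝ) (p : ℂ × ℂ) : ℂ × ℂ :=
  (p.2, -((lam:ℂ) + ((min (t^2) (R^2) : ℝ) : ℂ)/4) * p.1)

lemma vf_lip (R : ℝ) (t : ℝ) :
    LipschitzWith ⟨1 + ‖(lam:ℂ)‖ + R^2/4, by positivity⟩ (vf lam R t) := by
  apply LipschitzWith.of_dist_le_mul
  intro p q
  set Kr : ℝ := 1 + ‖(lam:ℂ)‖ + R^2/4 with hKr
  have hK1 : (1:ℝ) ≤ Kr := by
    have h0 : (0:ℝ) ≤ ‖(lam:ℂ)‖ + R^2/4 := by positivity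
    rw [hKr]; linarith
  show dist _ _ ≤ Kr * dist p q
  set c : ℂ := -((lam:ℂ) + ((min (t^2) (R^2) : ℝ) : ℂ)/4) with hc
  have hmin0 : (0:ℝ) ≤ min (t^2) (R^2) := le_min (sq_nonneg t) (sq_nonneg R)
  have hcn : ‖c‖ ≤ Kr := by
    rw [hc, norm_neg]
    have hnorm : ‖((min (t^2) (R^2) : ℝ) : ℂ)/4‖ = (min (t^2) (R^2))/4 := by
      rw [norm_div, Complex.norm_real, Real.norm_of_nonneg hmin0]
      norm_num
    calc ‖(lam:ℂ) + ((min (t^2) (R^2) : ℝ) : ℂ)/4‖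
        ≤ ‖(lam:ℂ)‖ + ‖((min (t^2) (R^2) : ℝ) : ℂ)/4‖ := norm_add_le _ _
    _ = ‖(lam:ℂ)‖ + (min (t^2) (R^2))/4 := by rw [hnorm]
    _ ≤ Kr := by
        have h1 := min_le_right (t^2) (R^2)
        rw [hKr]; linarith
  have hsecond : dist (c * p.1) (c * q.1) = ‖c‖ * dist p.1 q.1 := by
    rw [dist_eq_norm, dist_eq_norm, ← mul_sub, norm_mul]
  have hd2 : dist (vf lam R t p) (vf lam R t q)
      = max (dist p.2 q.2) (‖c‖ * dist p.1 q.1) := by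
    rw [show vf lam R t p = (p.2, c * p.1) from rfl,
      show vf lam R t q = (q.2, c * q.1) from rfl, Prod.dist_eq, hsecond]
  rw [hd2, Prod.dist_eq]
  have hmaxnn : (0:ℝ) ≤ max (dist p.1 q.1) (dist p.2 q.2) :=
    le_max_of_le_left dist_nonneg
  apply max_le
  · calc dist p.2 q.2 ≤ max (dist p.1 q.1) (dist p.2 q.2) := le_max_right _ _
    _ ≤ Kr * max (dist p.1 q.1) (dist p.2 q.2) := le_mul_of_one_le_left hmaxnn hK1
  · calc ‖c‖ * dist p.1 q.1 ≤ Kr * dist p.1 q.1 :=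
        mul_le_mul_of_nonneg_right hcn dist_nonneg
    _ ≤ Kr * max (dist p.1 q.1) (dist p.2 q.2) :=
        mul_le_mul_of_nonneg_left (le_max_left _ _) (by linarith)

lemma sol_unique {R : ℝ} (hR : 0 < R) (F G : ℝ → ℂ × ℂ)
    (hF : ∀ t ∈ Set.Ioo (-R) R,
      HasDerivAt F ((F t).2, -((lam:ℂ) + (t:ℂ)^2/4) * (F t).1) t)
    (hG : ∀ t ∈ Set.Ioo (-R) R,
      HasDerivAt G ((G t).2, -((lam:ℂ) + (t:ℂ)^2/4) * (G t).1) t)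
    (h0 : F 0 = G 0) : Set.EqOn F G (Set.Ioo (-R) R) := by
  have hv : ∀ t, LipschitzOnWith ⟨1 + ‖(lam:ℂ)‖ + R^2/4, by positivity⟩ (vf lam R t)
      (Set.univ) := fun t => (vf_lip lam R t).lipschitzOnWith
  have key : ∀ t ∈ Set.Ioo (-R) R, ∀ (p : ℂ × ℂ),
      vf lam R t p = (p.2, -((lam:ℂ) + (t:ℂ)^2/4) * p.1) := by
    intro t ht p
    have h1 : min (t^2) (R^2) = t^2 := min_eq_left (sq_lt_sq' ht.1 ht.2).le
    rw [vf, h1]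
    push_cast
    rfl
  apply ODE_solution_unique_of_mem_Ioo (v := vf lam R) (s := fun _ => Set.univ) (fun t _ => hv t)
    (t₀ := 0) ⟨neg_lt_zero.mpr hR, hR⟩ ?_ ?_ h0
  · intro t ht
    refine ⟨?_, trivial⟩
    rw [key t ht]
    exact hF t ht
  · intro t ht
    refine ⟨?_, trivial⟩
    rw [key t ht]
    exact hG t ht

lemma hF_pair (t : ℝ) :
    HasDerivAt (fun s : ℝ => (u₁ lam s, du lam s))
      (du lam t, -((lam:ℂ) + (t:ℂ)^2/4) * u₁ lam t) t := by
  have h2 := (hu' lam t).prodMk (hdu' lam t)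
  rw [ode lam t] at h2
  exact h2

lemma conj_u₁ (x : ℝ) : (starRingEnd ℂ) (u₁ lam x) = u₁ lam x := by
  set R : ℝ := |x| + 1 with hR
  have hR0 : (0:ℝ) < R := by positivity
  have hder : ∀ t : ℝ, HasDerivAt (fun s => (starRingEnd ℂ) (u₁ lam s))
      ((starRingEnd ℂ) (du lam t)) t := by
    intro t
    have h := Complex.conjCLE.toContinuousLinearMap.hasFDerivAt.comp_hasDerivAt t (hu' lam t)
    exact h
  have hder2 : ∀ t : ℝ, HasDerivAt (fun s => (starRingEnd ℂ) (du lam s))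
      ((starRingEnd ℂ) (ddu lam t)) t := by
    intro t
    have h := Complex.conjCLE.toContinuousLinearMap.hasFDerivAt.comp_hasDerivAt t (hdu' lam t)
    exact h
  have heq := sol_unique lam hR0 (fun t => (u₁ lam t, du lam t))
      (fun t => ((starRingEnd ℂ) (u₁ lam t), (starRingEnd ℂ) (du lam t)))
      (fun t _ => hF_pair lam t)
      (fun t _ => by
        have h3 : (starRingEnd ℂ) (ddu lam t)
            = -((lam:ℂ)+(t:ℂ)^2/4) * (starRingEnd ℂ) (u₁ lam t) := by
          rw [ode lam t]
          simp [map_mul, map_neg, map_add, map_div₀, map_pow, Complex.conj_ofReal, map_ofNat]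
        have h2 := (hder t).prodMk (hder2 t)
        rw [h3] at h2
        exact h2)
      (by
        rw [Prod.ext_iff]
        constructor
        · simp [u₁_zero]
        · simp [du_zero])
  have hx : x ∈ Set.Ioo (-R) R := by
    constructor
    · have := neg_abs_le x; rw [hR]; linarith
    · have := le_abs_self x; rw [hR]; linarith
  have h5 := heq hx
  exact (Prod.ext_iff.mp h5).1.symm

lemma u₁_even (x : ℝ) : u₁ lam (-x) = u₁ lam x := by
  set R : ℝ := |x| + 1 with hR
  have hR0 : (0:ℝ) < R := by positivity
  have hder1 : ∀ t : ℝ, HasDerivAt (fun s : ℝ => u₁ lam (-s)) (-du lam (-t)) t := by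
    intro t
    have h := HasDerivAt.scomp t (hu' lam (-t)) (hasDerivAt_neg t)
    simp at h; exact h
  have hder2 : ∀ t : ℝ, HasDerivAt (fun s : ℝ => -du lam (-s)) (ddu lam (-t)) t := by
    intro t
    have h := (HasDerivAt.scomp t (hdu' lam (-t)) (hasDerivAt_neg t)).neg
    simp at h; exact h
  have heq := sol_unique lam hR0 (fun t => (u₁ lam (-t), -du lam (-t)))
      (fun t => (u₁ lam t, du lam t))
      (fun t _ => by
        have h4 : ddu lam (-t) = -((lam:ℂ)+(t:ℂ)^2/4) * u₁ lam (-t) := by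
          rw [ode lam (-t)]
          push_cast
          ring_nf
        have h2 := (hder1 t).prodMk (hder2 t)
        rw [h4] at h2
        exact h2)
      (fun t _ => hF_pair lam t)
      (by
        rw [Prod.ext_iff]
        constructor
        · simp
        · simp [du_zero])
  have hx : x ∈ Set.Ioo (-R) R := by
    constructor
    · have := neg_abs_le x; rw [hR]; linarith
    · have := le_abs_self x; rw [hR]; linarith
  have h5 := heq hx
  exact (Prod.ext_iff.mp h5).1

end
end U1Aux

theorem u₁_even_real_solution (lam : ℝ) :
    (∀ x : ℝ, (u₁ lam x).im = 0) ∧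
    (∀ x : ℝ, u₁ lam (-x) = u₁ lam x) ∧
    (∀ x : ℝ, -(iteratedDeriv 2 (u₁ lam) x) - (1/4) * (x:ℂ)^2 * u₁ lam x
        = (lam:ℂ) * u₁ lam x) ∧
    u₁ lam 0 = 1 ∧ deriv (u₁ lam) 0 = 0 := by
  have hd1 : deriv (u₁ lam) = U1Aux.du lam := funext fun t => (U1Aux.hu' lam t).deriv
  refine ⟨?_, U1Aux.u₁_even lam, ?_, U1Aux.u₁_zero lam, ?_⟩
  · intro x
    have h := U1Aux.conj_u₁ lam x
    rw [Complex.conj_eq_iff_im] at h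
    exact h
  · intro x
    have h2 : iteratedDeriv 2 (u₁ lam) x = U1Aux.ddu lam x := by
      rw [iteratedDeriv_succ, iteratedDeriv_one, hd1]
      exact (U1Aux.hdu' lam x).deriv
    rw [h2, U1Aux.ode lam x]
    ring
  · rw [hd1]
    exact U1Aux.du_zero lam
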